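/- Let T be the vector space spanned by rooted trees with vertices decorated by a set V and edges decorated by a set E, and for a ∈ E let σ ▷ᵃ τ := Σ_{v ∈ N_τ} σ ▷ᵃ_v τ be the sum of graftings of σ onto each vertex v of τ by a new edge decorated a. Then (T, (▷ᵃ)_{a∈E}) is an E-multi-pre-Lie algebra. -/

import Mathlib

/-- Planar rooted trees with vertex decorations in `V` and edge decorations in `E`. -/
inductive RT (V E : Type) : Type where
  | node : V → List (E × RT V E) → RT V E

/-- One-step reordering of children (at the root or at a deeper vertex). -/
inductive Swap {V E : Type} : RT V E → RT V E → Prop where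
  | here (v : V) (l₁ l₂ : List (E × RT V E)) (p q : E × RT V E) :
      Swap (.node v (l₁ ++ p :: q :: l₂)) (.node v (l₁ ++ q :: p :: l₂))
  | child (v : V) (l₁ l₂ : List (E × RT V E)) (e : E) {t t' : RT V E} :
      Swap t t' → Swap (.node v (l₁ ++ (e, t) :: l₂)) (.node v (l₁ ++ (e, t') :: l₂))

/-- (Non-planar) decorated rooted trees: planar trees modulo reordering of children. -/
def QT (V E : Type) : Type := Quot (@Swap V E)

/-- The linear span of decorated rooted trees, with rational coefficients. -/
abbrev Span (V E : Type) : Type := QT V E →₀ ℚ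

def qt {V E : Type} (t : RT V E) : QT V E := Quot.mk _ t

/-- A tree, as a basis vector of the span. -/
noncomputable def bas {V E : Type} (t : RT V E) : Span V E := Finsupp.single (qt t) 1

/-- The element of the span given by a list of trees (sum with multiplicity). -/
noncomputable def ofList {V E : Type} (l : List (RT V E)) : Span V E := (l.map bas).sum

/-- Formal rational combination of planar trees, as an element of the span. -/
noncomputable def combo {V E : Type} (l : List (ℚ × RT V E)) : Span V E :=
  (l.map fun p => p.1 • bas p.2).sum

mutual
/-- List of the graftings of `σ` on each vertex of a tree, via a new `a`-edge. -/
def graftT {V E : Type} (a : E) (σ : RT V E) : RT V E → List (RT V E)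
  | .node v l => .node v ((a, σ) :: l) :: (graftL a σ l).map (.node v)
/-- Auxiliary: graftings of `σ` inside one of the listed subtrees. -/
def graftL {V E : Type} (a : E) (σ : RT V E) :
    List (E × RT V E) → List (List (E × RT V E))
  | [] => []
  | (e, t) :: r =>
      ((graftT a σ t).map fun t' => (e, t') :: r)
        ++ ((graftL a σ r).map fun r' => (e, t) :: r')
end

/-!
The associator `σ ▷ᵃ (ρ ▷ᵇ τ) - (σ ▷ᵃ ρ) ▷ᵇ τ` is the sum of the trees obtained by grafting
`σ` (by an `a`-edge) and `ρ` (by a `b`-edge) on two (possibly equal) vertices of `τ`: grafting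
`σ` on `ρ ▷ᵇ τ` hits either a vertex of `τ` or a vertex of `ρ`, and the terms of the second kind
add up to `(σ ▷ᵃ ρ) ▷ᵇ τ`. That sum is symmetric under `(a, σ) ↔ (b, ρ)`; when both trees land
on the same vertex, the two new edges appear in both orders, which is where the passage to
non-planar trees is needed. On planar trees this is a mutual induction on trees and lists of
children; the statement on the span follows by bilinearity.
-/

section

variable {V E : Type}

@[simp]
theorem ofList_nil : ofList ([] : List (RT V E)) = 0 := rfl

@[simp]
theorem ofList_cons (t : RT V E) (L : List (RT V E)) :
    ofList (t :: L) = bas t + ofList L := by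
  simp [ofList]

@[simp]
theorem ofList_append (L₁ L₂ : List (RT V E)) :
    ofList (L₁ ++ L₂) = ofList L₁ + ofList L₂ := by
  simp [ofList]

theorem ofList_flatMap_nil {α : Type} (L : List α) :
    ofList (L.flatMap fun _ => ([] : List (RT V E))) = 0 := by
  rw [List.flatMap_eq_nil_iff.mpr fun _ _ => rfl, ofList_nil]

theorem ofList_flatMap_cons {α : Type} (L : List α) (f : α → RT V E) (g : α → List (RT V E)) :
    ofList (L.flatMap fun x => f x :: g x) = ofList (L.map f) + ofList (L.flatMap g) := by
  induction L with
  | nil => simp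
  | cons x L ih =>
    simp only [List.flatMap_cons, List.map_cons, ofList_cons, ofList_append, ih]
    abel

theorem ofList_flatMap_append {α : Type} (L : List α) (f g : α → List (RT V E)) :
    ofList (L.flatMap fun x => f x ++ g x) = ofList (L.flatMap f) + ofList (L.flatMap g) := by
  induction L with
  | nil => simp
  | cons x L ih =>
    simp only [List.flatMap_cons, ofList_append, ih]
    abel

theorem ofList_flatMap_map_comm {α β : Type} (L₁ : List α) (L₂ : List β) (f : α → β → RT V E) :
    ofList (L₁.flatMap fun x => L₂.map (f x)) = ofList (L₂.flatMap fun y => L₁.map (f · y)) := by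
  induction L₁ with
  | nil => simp [ofList_flatMap_nil]
  | cons x L ih =>
    rw [List.flatMap_cons, ofList_append, ih]
    exact (ofList_flatMap_cons L₂ (f x) fun y => L.map (f · y)).symm

theorem bas_eq_of_swap {t t' : RT V E} (h : Swap t t') : bas t = bas t' := by
  rw [bas, bas, qt, qt, Quot.sound h]

theorem ofList_map_eq_lmapDomain (C : RT V E → RT V E)
    (hC : ∀ t t', Swap t t' → Swap (C t) (C t')) (L : List (RT V E)) :
    ofList (L.map C)
      = Finsupp.lmapDomain (α := QT V E) (α' := QT V E) ℚ ℚ (Quot.map C hC) (ofList L) := by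
  induction L with
  | nil => simp
  | cons t L ih =>
    rw [List.map_cons, ofList_cons, ofList_cons, ih, map_add]
    exact congrArg (· + _) (Finsupp.mapDomain_single (α := QT V E) (β := QT V E) (M := ℚ)
      (f := Quot.map C hC) (a := qt t) (b := 1)).symm

theorem ofList_map_congr (C : RT V E → RT V E) (hC : ∀ t t', Swap t t' → Swap (C t) (C t'))
    {L L' : List (RT V E)} (h : ofList L = ofList L') : ofList (L.map C) = ofList (L'.map C) := by
  rw [ofList_map_eq_lmapDomain C hC, ofList_map_eq_lmapDomain C hC, h]

mutual

theorem graftT_multiPreLie (a b : E) (σ ρ τ : RT V E) :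
    ofList ((graftT b ρ τ).flatMap (graftT a σ))
      + ofList ((graftT b ρ σ).flatMap fun σ' => graftT a σ' τ)
    = ofList ((graftT a σ τ).flatMap (graftT b ρ))
      + ofList ((graftT a σ ρ).flatMap fun ρ' => graftT b ρ' τ) := by
  match τ with
  | .node v l =>
    have hchildren := graftL_multiPreLie a b σ ρ v [] l
    simp only [List.nil_append, List.map_flatMap] at hchildren
    have hroot : bas (.node v ((a, σ) :: (b, ρ) :: l)) = bas (.node v ((b, ρ) :: (a, σ) :: l)) :=
      bas_eq_of_swap (Swap.here v [] l (a, σ) (b, ρ))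
    simp only [graftT, graftL, List.flatMap_cons, List.flatMap_map, List.map_append,
      List.map_map, Function.comp_def, ofList_cons, ofList_append, ofList_flatMap_cons]
    linear_combination (norm := abel) hroot + hchildren
termination_by sizeOf τ

/-- The children lists are kept inside the context `node v (pre ++ ·)`, so that reordering
children of a subtree (`Swap.child`) is available in the span. -/
theorem graftL_multiPreLie (a b : E) (σ ρ : RT V E) (v : V) (pre l : List (E × RT V E)) :
    ofList (((graftL b ρ l).flatMap (graftL a σ)).map (.node v <| pre ++ ·))
      + ofList (((graftT b ρ σ).flatMap fun σ' => graftL a σ' l).map (.node v <| pre ++ ·))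
    = ofList (((graftL a σ l).flatMap (graftL b ρ)).map (.node v <| pre ++ ·))
      + ofList (((graftT a σ ρ).flatMap fun ρ' => graftL b ρ' l).map (.node v <| pre ++ ·)) := by
  match l with
  | [] => simp [graftL, ofList_flatMap_nil, List.map_flatMap]
  | (e, t) :: r =>
    have hsubtree := graftT_multiPreLie a b σ ρ t
    rw [← ofList_append, ← ofList_append] at hsubtree
    have hhead := ofList_map_congr (fun t => .node v (pre ++ (e, t) :: r))
      (fun _ _ h => Swap.child v pre r e h) hsubtree
    simp only [List.map_append, ofList_append, List.map_flatMap] at hhead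
    have htail := graftL_multiPreLie a b σ ρ v (pre ++ [(e, t)]) r
    simp only [List.append_assoc, List.singleton_append, List.map_flatMap] at htail
    have hcomm₁ := ofList_flatMap_map_comm (graftT b ρ t) (graftL a σ r)
      fun t' r' => .node v (pre ++ (e, t') :: r')
    have hcomm₂ := ofList_flatMap_map_comm (graftT a σ t) (graftL b ρ r)
      fun t' r' => .node v (pre ++ (e, t') :: r')
    simp only [graftL, List.flatMap_append, List.flatMap_map, List.map_flatMap, List.map_append,
      List.map_map, Function.comp_def, ofList_append, ofList_flatMap_append]
    linear_combination (norm := abel) hhead + htail + hcomm₁ - hcomm₂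
termination_by sizeOf l

end

@[elab_as_elim]
theorem Span.induction_on {p : Span V E → Prop} (x : Span V E) (zero : p 0)
    (add : ∀ x y, p x → p y → p (x + y)) (smul : ∀ (c : ℚ) x, p x → p (c • x))
    (basis : ∀ t, p (bas t)) : p x := by
  induction x using Finsupp.induction_linear with
  | zero => exact zero
  | add x y hx hy => exact add x y hx hy
  | single q c =>
    induction q using Quot.ind with
    | mk t =>
      convert smul c _ (basis t) using 1
      exact (Finsupp.smul_single_one (qt t) c).symm

theorem multiPreLie_of_bas (g : E → Span V E →ₗ[ℚ] Span V E →ₗ[ℚ] Span V E)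
    (h : ∀ (a b : E) (σ ρ τ : RT V E),
      g a (bas σ) (g b (bas ρ) (bas τ)) - g b (g a (bas σ) (bas ρ)) (bas τ)
        = g b (bas ρ) (g a (bas σ) (bas τ)) - g a (g b (bas ρ) (bas σ)) (bas τ))
    (a b : E) (x y z : Span V E) :
    g a x (g b y z) - g b (g a x y) z = g b y (g a x z) - g a (g b y x) z := by
  induction x using Span.induction_on with
  | zero => simp
  | add x x' hx hx' =>
    simp only [map_add, LinearMap.add_apply]
    linear_combination (norm := abel) hx + hx'
  | smul c x hx => simp only [map_smul, LinearMap.smul_apply, ← smul_sub, hx]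
  | basis σ =>
    induction y using Span.induction_on with
    | zero => simp
    | add y y' hy hy' =>
      simp only [map_add, LinearMap.add_apply]
      linear_combination (norm := abel) hy + hy'
    | smul c y hy => simp only [map_smul, LinearMap.smul_apply, ← smul_sub, hy]
    | basis ρ =>
      induction z using Span.induction_on with
      | zero => simp
      | add z z' hz hz' =>
        simp only [map_add]
        linear_combination (norm := abel) hz + hz'
      | smul c z hz => simp only [map_smul, ← smul_sub, hz]
      | basis τ => exact h a b σ ρ τ

section bilinear

variable {g : Span V E →ₗ[ℚ] Span V E →ₗ[ℚ] Span V E} {f : RT V E → RT V E → List (RT V E)}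

theorem apply_bas_ofList (hg : ∀ σ τ, g (bas σ) (bas τ) = ofList (f σ τ)) (σ : RT V E)
    (L : List (RT V E)) : g (bas σ) (ofList L) = ofList (L.flatMap (f σ)) := by
  induction L with
  | nil => simp
  | cons t L ih => rw [ofList_cons, map_add, hg, ih, List.flatMap_cons, ofList_append]

theorem apply_ofList_bas (hg : ∀ σ τ, g (bas σ) (bas τ) = ofList (f σ τ)) (L : List (RT V E))
    (τ : RT V E) : g (ofList L) (bas τ) = ofList (L.flatMap (f · τ)) := by
  induction L with
  | nil => simp
  | cons t L ih => rw [ofList_cons, map_add, LinearMap.add_apply, hg, ih, List.flatMap_cons,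
      ofList_append]

end bilinear

end

/-- **Grafting is multi-pre-Lie.**  On the span `T` of decorated rooted trees, the
family of grafting products `σ ▷ᵃ τ := Σ_{v ∈ N_τ} σ ▷ᵃ_v τ` (graft `σ` on each vertex
`v` of `τ` via a new `a`-decorated edge) satisfies the `E`-multi-pre-Lie identity.
Here `g` is the bilinear extension of grafting to the span. -/
theorem grafting_multiPreLie {V E : Type}
    (g : E → Span V E →ₗ[ℚ] Span V E →ₗ[ℚ] Span V E)
    (hg : ∀ (a : E) (σ τ : RT V E), g a (bas σ) (bas τ) = ofList (graftT a σ τ)) :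
    ∀ (a b : E) (x y z : Span V E),
      g a x (g b y z) - g b (g a x y) z = g b y (g a x z) - g a (g b y x) z := by
  refine multiPreLie_of_bas g fun a b σ ρ τ => ?_
  rw [hg b ρ τ, hg a σ ρ, hg a σ τ, hg b ρ σ, apply_bas_ofList (hg a), apply_ofList_bas (hg b),
    apply_bas_ofList (hg b), apply_ofList_bas (hg a), sub_eq_sub_iff_add_eq_add]
  exact graftT_multiPreLie a b σ ρ τ
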